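/- Let λ, μ > 0, z > 0, x ∈ ℝ, y ≠ 0, 0 ≤ t ≤ T, and set δ = √( (μ−λ)² + 4 μ λ z ), Ã = [[λ, −μ z/y], [−λ y, μ]], and σ⁺ = [[0,1],[0,0]]. Then μ (z/y) · e^{(λ+μ)T/2} · (1, 1) · exp(−Ã (T−t)) · σ⁺ · exp(−Ã t) · (1, xy)ᵀ = z μ [ cosh(δ(T−t)/2) + ((2 y λ + μ − λ)/δ) sinh(δ(T−t)/2) ] · [ x cosh(δt/2) + ((2 λ − x(μ−λ))/δ) sinh(δt/2) ]. -/

import Mathlib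

/-!
Write `Ã = (tr Ã / 2) • 1 + N`. By Cayley–Hamilton `N * N = (δ / 2) ^ 2 • 1`, where
`δ ^ 2 = tr Ã ^ 2 - 4 det Ã = (μ - λ) ^ 2 + 4 μ λ z`, so the exponential series of `N` splits into
a `cosh` and a `sinh` part and `e^{-sÃ} = e^{-s tr Ã / 2} (cosh (δ s / 2) - sinh (δ s / 2) / (δ / 2) N)`.
The scalar factors `e^{-(T - t) tr Ã / 2} e^{-t tr Ã / 2}` cancel `e^{(λ + μ) T / 2}`, and `σ⁺`
factors the matrix element into `(1, 1) e^{-(T - t)Ã} e₁` times `e₂ᵀ e^{-tÃ} (1, xy)ᵀ`, which are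
the two brackets of the closed form.
-/

open Matrix NormedSpace
open scoped Nat

section HyperbolicExp

variable {A : Type*} [Ring A] [Algebra ℝ A] [TopologicalSpace A] [IsTopologicalRing A]
  [ContinuousSMul ℝ A] [T2Space A]

theorem exp_eq_cosh_add_sinh_of_mul_self_eq {N : A} {c : ℝ} (hc : c ≠ 0)
    (hN : N * N = c ^ 2 • (1 : A)) :
    exp N = Real.cosh c • (1 : A) + (Real.sinh c / c) • N := by
  have hpow (n : ℕ) : N ^ (2 * n) = c ^ (2 * n) • (1 : A) := by
    rw [pow_mul, sq, hN, smul_pow, one_pow, ← pow_mul]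
  have heven : HasSum (fun n : ℕ => ((2 * n)! : ℝ)⁻¹ • N ^ (2 * n)) (Real.cosh c • (1 : A)) := by
    convert (Real.hasSum_cosh c).smul_const (1 : A) using 2 with n
    rw [hpow, smul_smul, div_eq_inv_mul]
  have hodd : HasSum (fun n : ℕ => ((2 * n + 1)! : ℝ)⁻¹ • N ^ (2 * n + 1))
      ((Real.sinh c / c) • N) := by
    convert ((Real.hasSum_sinh c).div_const c).smul_const N using 2 with n
    rw [pow_succ, hpow, smul_mul_assoc, one_mul, smul_smul, pow_succ]
    congr 1
    field_simp
  rw [exp_eq_tsum ℝ]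
  exact HasSum.tsum_eq (heven.even_add_odd hodd)

theorem exp_smul_eq_cosh_add_sinh_of_mul_self_eq {N : A} {c : ℝ} (hc : c ≠ 0)
    (hN : N * N = c ^ 2 • (1 : A)) (s : ℝ) :
    exp (s • N) = Real.cosh (s * c) • (1 : A) + (Real.sinh (s * c) / c) • N := by
  rcases eq_or_ne s 0 with rfl | hs
  · simp
  have hsN : (s • N) * (s • N) = (s * c) ^ 2 • (1 : A) := by
    rw [smul_mul_smul_comm, hN, smul_smul, mul_pow, sq s]
  rw [exp_eq_cosh_add_sinh_of_mul_self_eq (mul_ne_zero hs hc) hsN, smul_smul,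
    div_mul_eq_mul_div, mul_comm s c, mul_div_mul_right _ _ hs]

end HyperbolicExp

namespace Matrix

theorem two_smul_sub_trace_mul_self_fin_two {R : Type*} [CommRing R]
    (M : Matrix (Fin 2) (Fin 2) R) :
    ((2 : R) • M - M.trace • 1) * ((2 : R) • M - M.trace • 1) =
      (M.trace ^ 2 - 4 * M.det) • (1 : Matrix (Fin 2) (Fin 2) R) := by
  ext i j
  fin_cases i <;> fin_cases j <;>
    simp [trace_fin_two, det_fin_two, mul_apply, Fin.sum_univ_two, one_apply] <;> ring

theorem exp_smul_one {n : Type*} [Fintype n] [DecidableEq n] (r : ℝ) :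
    exp (r • (1 : Matrix n n ℝ)) = Real.exp r • (1 : Matrix n n ℝ) := by
  rw [smul_one_eq_diagonal, smul_one_eq_diagonal, exp_diagonal]
  congr 1
  funext i
  simp [← Real.exp_eq_exp_ℝ]

theorem exp_smul_fin_two {M : Matrix (Fin 2) (Fin 2) ℝ} {δ : ℝ} (hδ0 : δ ≠ 0)
    (hδ : δ ^ 2 = M.trace ^ 2 - 4 * M.det) (s : ℝ) :
    exp (s • M) = Real.exp (s * M.trace / 2) •
      (Real.cosh (δ * s / 2) • 1 +
        (Real.sinh (δ * s / 2) / (δ / 2)) • (M - (M.trace / 2) • 1)) := by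
  set N := M - (M.trace / 2) • (1 : Matrix (Fin 2) (Fin 2) ℝ) with hN
  have hNN : N * N = (δ / 2) ^ 2 • (1 : Matrix (Fin 2) (Fin 2) ℝ) := by
    have hN2 : N = (1 / 2 : ℝ) • ((2 : ℝ) • M - M.trace • 1) := by
      rw [hN]; module
    rw [hN2, smul_mul_smul_comm, M.two_smul_sub_trace_mul_self_fin_two, smul_smul, div_pow, hδ]
    congr 1
    ring
  have hsplit : s • M = (s * M.trace / 2) • (1 : Matrix (Fin 2) (Fin 2) ℝ) + s • N := by
    rw [hN, smul_sub, smul_smul, mul_div_assoc, add_sub_cancel]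
  rw [hsplit, exp_add_of_commute _ _ ((Commute.one_left _).smul_left _), exp_smul_one,
    exp_smul_eq_cosh_add_sinh_of_mul_self_eq (div_ne_zero hδ0 two_ne_zero) hNN, smul_mul,
    one_mul]
  simp only [mul_comm δ s, mul_div_assoc]

end Matrix

theorem stmt_17_general (lam mu z x y t T : ℝ) (hlam : 0 < lam) (hmu : 0 < mu) (hz : 0 < z)
    (hy : y ≠ 0)
    (δ : ℝ) (hδ : δ = Real.sqrt ((mu - lam) ^ 2 + 4 * mu * lam * z))
    (A : Matrix (Fin 2) (Fin 2) ℝ) (hA : A = !![lam, -(mu * z / y); -(lam * y), mu])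
    (σplus : Matrix (Fin 2) (Fin 2) ℝ) (hσ : σplus = !![0, 1; 0, 0]) :
    mu * (z / y) * Real.exp ((lam + mu) * T / 2) *
      (![1, 1] ⬝ᵥ
        (NormedSpace.exp (-((T - t) • A)) * σplus *
          NormedSpace.exp (-(t • A))).mulVec ![1, x * y]) =
    z * mu *
      (Real.cosh (δ * (T - t) / 2) +
        (2 * y * lam + mu - lam) / δ * Real.sinh (δ * (T - t) / 2)) *
      (x * Real.cosh (δ * t / 2) +
        (2 * lam - x * (mu - lam)) / δ * Real.sinh (δ * t / 2)) := by
  have hdisc : 0 < (mu - lam) ^ 2 + 4 * mu * lam * z := by positivity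
  have hδpos : 0 < δ := hδ ▸ Real.sqrt_pos.mpr hdisc
  have htr : A.trace = lam + mu := by simp [hA, trace_fin_two]
  have hδ2 : δ ^ 2 = A.trace ^ 2 - 4 * A.det := by
    rw [hδ, Real.sq_sqrt hdisc.le, htr, hA, det_fin_two_of]
    field_simp
    ring
  have hexp : Real.exp ((lam + mu) * T / 2) =
      Real.exp ((T - t) * (lam + mu) / 2) * Real.exp (t * (lam + mu) / 2) := by
    rw [← Real.exp_add]; ring_nf
  rw [← neg_smul, ← neg_smul, exp_smul_fin_two hδpos.ne' hδ2, exp_smul_fin_two hδpos.ne' hδ2,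
    htr, hexp, hσ, hA]
  simp only [neg_mul, mul_neg, neg_div, Real.cosh_neg, Real.sinh_neg, Real.exp_neg]
  simp only [dotProduct, mulVec, smul_add, mul_apply, Matrix.add_apply, Matrix.smul_apply,
    smul_eq_mul, Matrix.sub_apply, of_apply, cons_val', cons_val_fin_one, Fin.sum_univ_two,
    Fin.isValue, cons_val_zero, cons_val_one, mul_zero, add_zero, zero_mul, mul_one, zero_add,
    ne_eq, one_ne_zero, not_false_eq_true, one_apply_ne, sub_zero, one_apply_eq, one_mul]
  field_simp
  ring

/-- Closed form of the per-atom matrix element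
`μ y⁻¹ z (1,1) e^{−Ã(T−t)} σ⁺ e^{−Ã t} (1,xy)ᵀ` giving the conditional radiation
intensity at an intermediate time `t`. -/
theorem stmt_17 (lam mu z x y t T : ℝ) (hlam : 0 < lam) (hmu : 0 < mu) (hz : 0 < z)
    (hy : y ≠ 0) (ht0 : 0 ≤ t) (htT : t ≤ T)
    (δ : ℝ) (hδ : δ = Real.sqrt ((mu - lam) ^ 2 + 4 * mu * lam * z))
    (A : Matrix (Fin 2) (Fin 2) ℝ) (hA : A = !![lam, -(mu * z / y); -(lam * y), mu])
    (σplus : Matrix (Fin 2) (Fin 2) ℝ) (hσ : σplus = !![0, 1; 0, 0]) :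
    mu * (z / y) * Real.exp ((lam + mu) * T / 2) *
      (![1, 1] ⬝ᵥ
        (NormedSpace.exp (-((T - t) • A)) * σplus *
          NormedSpace.exp (-(t • A))).mulVec ![1, x * y]) =
    z * mu *
      (Real.cosh (δ * (T - t) / 2) +
        (2 * y * lam + mu - lam) / δ * Real.sinh (δ * (T - t) / 2)) *
      (x * Real.cosh (δ * t / 2) +
        (2 * lam - x * (mu - lam)) / δ * Real.sinh (δ * t / 2)) :=
  stmt_17_general lam mu z x y t T hlam hmu hz hy δ hδ A hA σplus hσ
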